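/- For the 3-dimensional para-Sasaki-like Riemannian Π-manifold (R³, φ, ξ, η, g) defined by the metric matrix [[cosh 2x³, sinh 2x³, 0],[sinh 2x³, cosh 2x³, 0],[0,0,1]], the Ricci tensor equals ρ = −2 η⊗η and the scalar curvature of g equals −2. -/

import Mathlib

open Matrix Real

/-- The metric matrix on `ℝ³` at `x`:
`[[cosh 2x³, sinh 2x³, 0],[sinh 2x³, cosh 2x³, 0],[0,0,1]]`. -/
noncomputable def exMetric (x : Fin 3 → ℝ) : Matrix (Fin 3) (Fin 3) ℝ :=
  !![Real.cosh (2 * x 2), Real.sinh (2 * x 2), 0;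
     Real.sinh (2 * x 2), Real.cosh (2 * x 2), 0;
     0, 0, 1]

/-- The partial derivative `∂_i h` of a function on `ℝ³`. -/
noncomputable def pd (i : Fin 3) (h : (Fin 3 → ℝ) → ℝ) (x : Fin 3 → ℝ) : ℝ :=
  fderiv ℝ h x (Pi.single i 1)

/-- The Christoffel symbols `Γ^k_{ij} = ½ g^{kl}(∂_i g_{lj} + ∂_j g_{li} − ∂_l g_{ij})`
of the Levi-Civita connection of `exMetric`. -/
noncomputable def Gamma (k i j : Fin 3) (x : Fin 3 → ℝ) : ℝ :=
  (1 / 2) * ∑ l : Fin 3, (exMetric x)⁻¹ k l *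
    (pd i (fun y => exMetric y l j) x + pd j (fun y => exMetric y l i) x
      - pd l (fun y => exMetric y i j) x)

/-- The curvature tensor
`R^l_{ijk} = ∂_i Γ^l_{jk} − ∂_j Γ^l_{ik} + Γ^l_{im}Γ^m_{jk} − Γ^l_{jm}Γ^m_{ik}`. -/
noncomputable def Riem (l i j k : Fin 3) (x : Fin 3 → ℝ) : ℝ :=
  pd i (Gamma l j k) x - pd j (Gamma l i k) x
    + ∑ m : Fin 3, (Gamma l i m x * Gamma m j k x - Gamma l j m x * Gamma m i k x)

/-- The Ricci tensor `ρ_{jk} = R^i_{ijk}`. -/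
noncomputable def Ric (j k : Fin 3) (x : Fin 3 → ℝ) : ℝ :=
  ∑ i : Fin 3, Riem i i j k x

/-- The scalar curvature `τ = g^{jk} ρ_{jk}`. -/
noncomputable def scalCurv (x : Fin 3 → ℝ) : ℝ :=
  ∑ j : Fin 3, ∑ k : Fin 3, (exMetric x)⁻¹ j k * Ric j k x

/-! The metric depends only on `t = x³` (index `2`), and `cosh² − sinh² = 1` makes
`g⁻¹ ∂ₜg` on the `(x¹, x²)`-plane the constant matrix `2J`, `J = [[0, 1], [1, 0]]`.
Hence `Γᵃ_{b3} = Γᵃ_{3b} = J_{ab}`, `Γ³_{ab} = −½ ∂ₜg_{ab}`, and all other Christoffel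
symbols vanish. As `Γⁱ_{im} = 0`, the Ricci tensor is `ρ_{jk} = ∂₃Γ³_{jk} − Γⁱ_{jm}Γᵐ_{ik}`:
on the plane the two terms cancel, the mixed components vanish, and `ρ₃₃ = −tr J² = −2`. -/

lemma pd_comp_apply {f : ℝ → ℝ} {d : ℝ} (i k : Fin 3) (x : Fin 3 → ℝ)
    (hf : HasDerivAt f d (x k)) :
    pd i (fun y => f (y k)) x = if i = k then d else 0 := by
  have h : HasFDerivAt (fun y : Fin 3 → ℝ => f (y k)) (d • ContinuousLinearMap.proj k) x :=
    hf.comp_hasFDerivAt x (hasFDerivAt_apply (𝕜 := ℝ) k x)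
  rw [pd, h.fderiv]
  simp [Pi.single_apply, eq_comm]

lemma hasDerivAt_cosh_two_mul (t : ℝ) :
    HasDerivAt (fun t => cosh (2 * t)) (2 * sinh (2 * t)) t := by
  simpa [mul_comm] using ((hasDerivAt_id t).const_mul 2).cosh

lemma hasDerivAt_sinh_two_mul (t : ℝ) :
    HasDerivAt (fun t => sinh (2 * t)) (2 * cosh (2 * t)) t := by
  simpa [mul_comm] using ((hasDerivAt_id t).const_mul 2).sinh

lemma exMetric_inv (x : Fin 3 → ℝ) :
    (exMetric x)⁻¹ = !![cosh (2 * x 2), -sinh (2 * x 2), 0;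
      -sinh (2 * x 2), cosh (2 * x 2), 0; 0, 0, 1] := by
  refine Matrix.inv_eq_right_inv ?_
  have h := cosh_sq_sub_sinh_sq (2 * x 2)
  ext i j
  fin_cases i <;> fin_cases j <;>
    simp [exMetric, Matrix.mul_apply, Fin.sum_univ_three] <;> first | ring1 | linear_combination h

lemma pd_exMetric (i l j : Fin 3) (x : Fin 3 → ℝ) :
    pd i (fun y => exMetric y l j) x =
      if i = 2 then !![2 * sinh (2 * x 2), 2 * cosh (2 * x 2), 0;
        2 * cosh (2 * x 2), 2 * sinh (2 * x 2), 0; 0, 0, 0] l j else 0 := by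
  fin_cases l <;> fin_cases j <;> simp only [exMetric] <;>
    simp [pd_comp_apply (f := fun t => cosh (2 * t)) i 2 x (hasDerivAt_cosh_two_mul _),
      pd_comp_apply (f := fun t => sinh (2 * t)) i 2 x (hasDerivAt_sinh_two_mul _),
      pd_comp_apply (f := fun _ => 0) i 2 x (hasDerivAt_const _ _),
      pd_comp_apply (f := fun _ => 1) i 2 x (hasDerivAt_const _ _)]

noncomputable def exChristoffel (t : ℝ) : Fin 3 → Matrix (Fin 3) (Fin 3) ℝ :=
  ![!![0, 0, 0; 0, 0, 1; 0, 1, 0],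
    !![0, 0, 1; 0, 0, 0; 1, 0, 0],
    !![-sinh (2 * t), -cosh (2 * t), 0; -cosh (2 * t), -sinh (2 * t), 0; 0, 0, 0]]

noncomputable def exChristoffelDeriv (t : ℝ) : Fin 3 → Matrix (Fin 3) (Fin 3) ℝ :=
  ![0, 0,
    !![-(2 * cosh (2 * t)), -(2 * sinh (2 * t)), 0;
      -(2 * sinh (2 * t)), -(2 * cosh (2 * t)), 0; 0, 0, 0]]

lemma hasDerivAt_exChristoffel (l j k : Fin 3) (t : ℝ) :
    HasDerivAt (fun t => exChristoffel t l j k) (exChristoffelDeriv t l j k) t := by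
  fin_cases l <;> fin_cases j <;> fin_cases k <;>
    simp [exChristoffel, exChristoffelDeriv, hasDerivAt_const] <;>
    first
    | exact (hasDerivAt_sinh_two_mul t).neg
    | exact (hasDerivAt_cosh_two_mul t).neg

lemma Gamma_eq (k i j : Fin 3) (x : Fin 3 → ℝ) : Gamma k i j x = exChristoffel (x 2) k i j := by
  have h := cosh_sq_sub_sinh_sq (2 * x 2)
  rw [_root_.Gamma, exMetric_inv]
  simp only [pd_exMetric]
  fin_cases k <;> fin_cases i <;> fin_cases j <;> simp [Fin.sum_univ_three, exChristoffel] <;>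
    first | ring1 | linear_combination h

lemma pd_Gamma (i l j k : Fin 3) (x : Fin 3 → ℝ) :
    pd i (Gamma l j k) x = if i = 2 then exChristoffelDeriv (x 2) l j k else 0 := by
  rw [show Gamma l j k = fun y => exChristoffel (y 2) l j k from funext (Gamma_eq l j k)]
  exact pd_comp_apply i 2 x (hasDerivAt_exChristoffel l j k _)

lemma Ric_eq (x : Fin 3 → ℝ) (j k : Fin 3) :
    Ric j k x = -2 * (if j = 2 then (1 : ℝ) else 0) * (if k = 2 then 1 else 0) := by
  simp only [Ric, Riem, pd_Gamma, Gamma_eq, Fin.sum_univ_three]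
  fin_cases j <;> fin_cases k <;> simp [exChristoffel, exChristoffelDeriv] <;> ring

/-- For the 3-dimensional para-Sasaki-like Riemannian Π-manifold
`(ℝ³, φ, ξ, η, g)` defined by the metric above (with `η = dx³`), the Ricci tensor
equals `ρ = −2 η⊗η`, i.e. `ρ_{jk} = −2 (dx³)_j (dx³)_k`, and the scalar curvature of
`g` equals `−2`. -/
theorem exMetric_ricci_scalar :
    (∀ (x : Fin 3 → ℝ) (j k : Fin 3),
      Ric j k x = -2 * (if j = 2 then (1 : ℝ) else 0) * (if k = 2 then 1 else 0)) ∧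
    (∀ x : Fin 3 → ℝ, scalCurv x = -2) :=
  ⟨Ric_eq, fun x => by simp [scalCurv, Ric_eq, exMetric_inv]⟩
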